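/- Folding estimate: if a weighted quadrilateral Q' is obtained from Q by a cellular folding that is at most m-to-1 on tiles and maps cut paths of Q to paths containing cut paths of Q', then M_sup(Q) ≥ M_sup(Q')/m. Formally: given finite tile sets T, T', a surjection f: T → T' with |f⁻¹(t')| ≤ m for all t' ∈ T', such that for every cut path P of T, f(P) contains a cut path of T', then pulling back any weight function ρ' on T' to ρ = ρ'∘f gives H(ρ) ≥ H'(ρ') and A(ρ) ≤ m·A'(ρ'), hence H(ρ)²/A(ρ) ≥ H'(ρ')²/(m·A'(ρ')). -/
import Mathlib


/-- The length of a path (a finite set of tiles) under a weight function. -/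
def pathLength {T : Type*} (ρ : T → ℝ) (p : Finset T) : ℝ := ∑ t ∈ p, ρ t

/-- The height: infimum of lengths over a family of cut paths. -/
noncomputable def height {T : Type*} (Cut : Set (Finset T)) (ρ : T → ℝ) : ℝ :=
  sInf ((fun p => pathLength ρ p) '' Cut)

/-- The area: sum of squares of the weights. -/
def area {T : Type*} [Fintype T] (ρ : T → ℝ) : ℝ := ∑ t, (ρ t) ^ 2

/-- Folding estimate: pulling back a weight function along an at most m-to-1
cellular folding does not decrease the height and multiplies the area by at
most m, so the modulus ratio drops by a factor of at most m. -/
theorem folding_estimate {T T' : Type*} [Fintype T] [Fintype T'] [DecidableEq T']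
    (Cut : Set (Finset T)) (Cut' : Set (Finset T')) (hCutne : Cut.Nonempty)
    (f : T → T') (hf : Function.Surjective f) (m : ℕ)
    (hfib : ∀ t' : T', (Finset.univ.filter (fun t => f t = t')).card ≤ m)
    (hcut : ∀ P ∈ Cut, ∃ P' ∈ Cut', P' ⊆ P.image f)
    (ρ' : T' → ℝ) (hρ' : ∀ t', 0 ≤ ρ' t') :
    height Cut' ρ' ≤ height Cut (fun t => ρ' (f t)) ∧
    area (fun t => ρ' (f t)) ≤ (m : ℝ) * area ρ' ∧
    height Cut' ρ' ^ 2 / ((m : ℝ) * area ρ') ≤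
      height Cut (fun t => ρ' (f t)) ^ 2 / area (fun t => ρ' (f t)) := by
  classical
  set ρ : T → ℝ := fun t => ρ' (f t) with hρdef
  have hρnn : ∀ t, 0 ≤ ρ t := fun t => hρ' (f t)
  -- nonneg of path lengths
  have hplnn : ∀ p : Finset T', 0 ≤ pathLength ρ' p := fun p =>
    Finset.sum_nonneg fun t _ => hρ' t
  have hplnnT : ∀ p : Finset T, 0 ≤ pathLength ρ p := fun p =>
    Finset.sum_nonneg fun t _ => hρnn t
  have hCut'ne : ((fun p => pathLength ρ' p) '' Cut').Nonempty := by
    obtain ⟨P, hP⟩ := hCutne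
    obtain ⟨P', hP', _⟩ := hcut P hP
    exact ⟨pathLength ρ' P', Set.mem_image_of_mem _ hP'⟩
  have hbdd' : BddBelow ((fun p => pathLength ρ' p) '' Cut') :=
    ⟨0, by rintro x ⟨p, _, rfl⟩; exact hplnn p⟩
  have h'nn : 0 ≤ height Cut' ρ' := le_csInf hCut'ne (by rintro x ⟨p, _, rfl⟩; exact hplnn p)
  -- height inequality
  have h1 : height Cut' ρ' ≤ height Cut ρ := by
    apply le_csInf (hCutne.image _)
    rintro x ⟨P, hP, rfl⟩
    obtain ⟨P', hP', hsub⟩ := hcut P hP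
    have step1 : height Cut' ρ' ≤ pathLength ρ' P' :=
      csInf_le hbdd' (Set.mem_image_of_mem _ hP')
    have step2 : pathLength ρ' P' ≤ pathLength ρ' (P.image f) :=
      Finset.sum_le_sum_of_subset_of_nonneg hsub (fun t _ _ => hρ' t)
    have step3 : pathLength ρ' (P.image f) ≤ pathLength ρ P := by
      unfold pathLength
      rw [← Finset.sum_fiberwise_of_maps_to (g := f) (t := P.image f)
        (fun t ht => Finset.mem_image_of_mem f ht) ρ]
      refine Finset.sum_le_sum fun t' ht' => ?_
      obtain ⟨t0, ht0⟩ := Finset.mem_image.mp ht'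
      have ht0' : t0 ∈ P.filter (fun t => f t = t') :=
        Finset.mem_filter.mpr ⟨ht0.1, ht0.2⟩
      calc ρ' t' = ρ (t0) := by rw [hρdef]; simp [ht0.2]
        _ ≤ ∑ t ∈ P.filter (fun t => f t = t'), ρ t :=
          Finset.single_le_sum (fun t _ => hρnn t) ht0'
    exact step1.trans (step2.trans step3)
  -- area inequality
  have h2 : area ρ ≤ (m : ℝ) * area ρ' := by
    have key : area ρ = ∑ t' : T',
        ((Finset.univ.filter (fun t => f t = t')).card : ℝ) * ρ' t' ^ 2 := by
      rw [area, ← Finset.sum_fiberwise (g := f) (s := Finset.univ)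
        (f := fun t => ρ (t) ^ 2)]
      refine Finset.sum_congr rfl fun t' _ => ?_
      have heq : ∀ t ∈ Finset.univ.filter (fun t => f t = t'),
          ρ t ^ 2 = ρ' t' ^ 2 := by
        intro t ht
        simp only [Finset.mem_filter] at ht
        rw [hρdef]; simp [ht.2]
      rw [Finset.sum_congr rfl heq, Finset.sum_const, nsmul_eq_mul]
    rw [key, area, Finset.mul_sum]
    refine Finset.sum_le_sum fun t' _ => ?_
    exact mul_le_mul_of_nonneg_right (by exact_mod_cast hfib t') (sq_nonneg _)
  refine ⟨h1, h2, ?_⟩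
  -- ratio inequality
  by_cases hA : area ρ = 0
  · -- then ρ' = 0, so height Cut' ρ' = 0
    have hz : ∀ t', ρ' t' = 0 := by
      intro t'
      obtain ⟨t, rfl⟩ := hf t'
      have := (Finset.sum_eq_zero_iff_of_nonneg
        (fun t _ => sq_nonneg (ρ t))).mp hA t (Finset.mem_univ t)
      exact pow_eq_zero_iff (n := 2) (by norm_num) |>.mp this
    have hH' : height Cut' ρ' = 0 := by
      obtain ⟨x, p, hp, rfl⟩ := hCut'ne
      have : pathLength ρ' p = 0 := Finset.sum_eq_zero fun t _ => hz t
      refine le_antisymm ?_ h'nn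
      calc height Cut' ρ' ≤ pathLength ρ' p := csInf_le hbdd' ⟨p, hp, rfl⟩
        _ = 0 := this
    simp [hH', hA]
  · have hApos : 0 < area ρ :=
      lt_of_le_of_ne (Finset.sum_nonneg fun t _ => sq_nonneg _) (Ne.symm hA)
    exact div_le_div₀ (sq_nonneg _) (pow_le_pow_left₀ h'nn h1 2) hApos h2
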